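/- arXiv:1908.02975 — 8 statements merged into one kernel-verified Lean document; each statement's English description precedes it below -/
import Mathlib

section
/- Let f : X → Y be a surjective morphism of normal integral schemes (or more concretely: let A ⊆ B be an extension of integrally closed domains such that Spec B → Spec A is surjective). If D and D' are Cartier divisors on Y such that the pullback f*D' ≤ f*D, then D' ≤ D. -/
/-!
Suppose `d' ∤ d`. An associated prime of `A ⧸ (d')` gives `y ∈ dA` with `d' ∤ y` such that
`P = ((d') : y)` is prime. Choose a prime `q` of `B` lying over `P`. For `a ∈ P` write
`a y = d' w`; since `f d' ∣ f y`, cancelling `f d'` in `B` shows `f w ∈ q`, i.e. `w ∈ P`.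
So `y / d'` stabilises the finitely generated nonzero ideal `P`, hence is integral over `A`
and lies in `A` by normality: `d' ∣ y`, a contradiction.
-/

open Submodule in
theorem Submodule.exists_isPrime_colon_smul_of_notMem {R M : Type*} [CommRing R]
    [IsNoetherianRing R] [AddCommGroup M] [Module R M] {N : Submodule R M} {x : M} (hx : x ∉ N) :
    ∃ r : R, r • x ∉ N ∧ (N.colon {r • x}).IsPrime := by
  let S : Submodule R (M ⧸ N) := span R {N.mkQ x}
  have hx' : (⟨N.mkQ x, mem_span_singleton_self _⟩ : S) ≠ 0 := by
    simpa [Subtype.ext_iff] using hx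
  obtain ⟨P, hP, -⟩ := exists_le_isAssociatedPrime_of_isNoetherianRing R _ hx'
  obtain ⟨hPprime, ⟨m, hmS⟩, rfl⟩ := isAssociatedPrime_iff.mp hP
  obtain ⟨r, rfl⟩ := mem_span_singleton.mp hmS
  have hcolon : (⊥ : Submodule R S).colon {⟨r • N.mkQ x, hmS⟩} = N.colon {r • x} := by
    ext a
    simp [mem_colon_singleton, Subtype.ext_iff, smul_smul, ← Quotient.mk_smul,
      Quotient.mk_eq_zero]
  refine ⟨r, fun hr => hPprime.ne_top ?_, hcolon ▸ hPprime⟩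
  rw [hcolon, Ideal.eq_top_iff_one, mem_colon_singleton, one_smul]
  exact hr

theorem IsIntegrallyClosed.dvd_of_forall_mem_exists_mem_mul_eq {R : Type*} [CommRing R] [IsDomain R]
    [IsIntegrallyClosed R] {I : Ideal R} (hI : I.FG) {x y : R} (hxI : x ∈ I) (hx : x ≠ 0)
    (h : ∀ a ∈ I, ∃ w ∈ I, a * y = x * w) : x ∣ y := by
  let K := FractionRing R
  have hxK : algebraMap R K x ≠ 0 := fun h0 => hx (IsFractionRing.to_map_eq_zero_iff.mp h0)
  have hint : IsIntegral R (algebraMap R K y / algebraMap R K x) := by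
    refine isIntegral_of_smul_mem_submodule (Submodule.map (Algebra.linearMap R K) I) ?_
      (Submodule.FG.map _ hI) _ ?_
    · exact (Submodule.ne_bot_iff _).mpr ⟨_, ⟨x, hxI, rfl⟩, hxK⟩
    · rintro _ ⟨a, ha, rfl⟩
      obtain ⟨w, hw, hayw⟩ := h a ha
      refine ⟨w, hw, ?_⟩
      simp only [Algebra.linearMap_apply, smul_eq_mul]
      rw [div_mul_eq_mul_div, eq_div_iff hxK, ← map_mul, ← map_mul, mul_comm w, ← hayw,
        mul_comm]
  obtain ⟨u, hu⟩ := IsIntegrallyClosed.isIntegral_iff.mp hint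
  refine ⟨u, IsFractionRing.injective R K ?_⟩
  rw [map_mul, hu, mul_div_cancel₀ _ hxK]

theorem Ideal.mem_comap_of_mul_eq_mul {A B : Type*} [CommRing A] [CommRing B] [IsDomain B]
    (f : A →+* B) (I : Ideal B) {x y a w : A} (hx : f x ≠ 0) (hxy : f x ∣ f y)
    (ha : a ∈ I.comap f) (h : a * y = x * w) : w ∈ I.comap f := by
  obtain ⟨b, hb⟩ := hxy
  have hw : f w = f a * b := mul_left_cancel₀ hx <| by
    rw [← map_mul, ← h, map_mul, hb, mul_left_comm]
  rw [mem_comap, hw]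
  exact I.mul_mem_right b ha

theorem le_of_pullback_le_of_surjective_general
    {A B : Type*} [CommRing A] [CommRing B] [IsDomain A] [IsDomain B]
    [IsIntegrallyClosed A]
    [IsNoetherianRing A]
    (f : A →+* B) (hinj : Function.Injective f)
    (hsurj : Function.Surjective (PrimeSpectrum.comap f))
    (d d' : A) (hd' : d' ≠ 0)
    (h : f d' ∣ f d) : d' ∣ d := by
  by_contra hnd
  obtain ⟨r, hrd, hP⟩ := Submodule.exists_isPrime_colon_smul_of_notMem
    (N := Ideal.span {d'}) (x := d) (by rwa [Ideal.mem_span_singleton])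
  set P : Ideal A := (Ideal.span {d'}).colon {r • d}
  have mem_P (a : A) : a ∈ P ↔ d' ∣ a * (r * d) := by
    rw [Submodule.mem_colon_singleton, smul_eq_mul, smul_eq_mul, Ideal.mem_span_singleton]
  obtain ⟨q, hq⟩ := hsurj ⟨P, hP⟩
  have hPq : P = q.asIdeal.comap f := (congrArg PrimeSpectrum.asIdeal hq).symm
  have hfd' : f d' ≠ 0 := (map_ne_zero_iff f hinj).mpr hd'
  refine hrd (Ideal.mem_span_singleton.mpr ?_)
  refine IsIntegrallyClosed.dvd_of_forall_mem_exists_mem_mul_eq (IsNoetherian.noetherian P)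
    ((mem_P d').mpr (dvd_mul_right _ _)) hd' fun a ha => ?_
  obtain ⟨w, hw⟩ := (mem_P a).mp ha
  refine ⟨w, ?_, hw⟩
  rw [hPq] at ha ⊢
  exact Ideal.mem_comap_of_mul_eq_mul f q.asIdeal hfd' (h.trans (map_dvd f (dvd_mul_left d r)))
    ha hw

/-- **Krishna–Park lemma** (affine/algebraic form). Let `A ⊆ B` be an extension of
integrally closed (normal) Noetherian domains such that `Spec B → Spec A` is surjective
(the algebraic incarnation of a surjective morphism of normal integral schemes).
Cartier divisors on the affine pieces are principal, given by nonzero elements; the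
pullback of the divisor of `a` is the divisor of `f a`, and `D' ≤ D` (i.e. `D - D'`
effective) means `d' ∣ d`. Then `f*D' ≤ f*D` implies `D' ≤ D`. -/
theorem le_of_pullback_le_of_surjective
    {A B : Type*} [CommRing A] [CommRing B] [IsDomain A] [IsDomain B]
    [IsIntegrallyClosed A] [IsIntegrallyClosed B]
    [IsNoetherianRing A] [IsNoetherianRing B]
    (f : A →+* B) (hinj : Function.Injective f)
    (hsurj : Function.Surjective (PrimeSpectrum.comap f))
    (d d' : A) (hd : d ≠ 0) (hd' : d' ≠ 0)
    (h : f d' ∣ f d) : d' ∣ d :=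
  le_of_pullback_le_of_surjective_general f hinj hsurj d d' hd' h
end

section
/- Let X be a scheme, and let D and E be effective Cartier divisors on X. Then the scheme-theoretic intersection D ×_X E is an effective Cartier divisor on X if and only if there exist effective Cartier divisors D', E', F on X with D = D' + F, E = E' + F, and the supports |D'| and |E'| disjoint. Moreover, when these conditions hold, D', E', F are uniquely determined by D and E. -/
/-- An ideal of `A` is the ideal of an effective Cartier divisor (on `Spec A`, the
affine-local model of a scheme) when it is generated by a single nonzerodivisor. -/
def IsEffectiveCartier {A : Type*} [CommRing A] (I : Ideal A) : Prop :=
  ∃ a ∈ nonZeroDivisors A, I = Ideal.span {a}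

/-!
If `I + J = (c)` with `c` a nonzerodivisor, then `c` divides generators `a = a'c`, `b = b'c` of
`I` and `J` (so `a'`, `b'` are nonzerodivisors too), and cancelling the nonzerodivisor `c` in
`(a')(c) + (b')(c) = (c)` shows that `(a')` and `(b')` are comaximal. Conversely `I' + J' = ⊤`
forces `I' F + J' F = F`, so the common part `F` is always the intersection `I + J`; cancelling
`F` then recovers `I'` and `J'`.
-/

open scoped nonZeroDivisors

namespace Ideal

variable {A : Type*} [CommRing A] {c : A} {I J : Ideal A}

theorem mul_span_singleton_mono_iff_of_mem_nonZeroDivisors (hc : c ∈ A⁰) :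
    I * span {c} ≤ J * span {c} ↔ I ≤ J := by
  simp_rw [mul_comm _ (span {c}), span_singleton_mul_le_span_singleton_mul,
    mul_cancel_left_mem_nonZeroDivisors hc, exists_eq_right', SetLike.le_def]

theorem mul_span_singleton_left_inj_of_mem_nonZeroDivisors (hc : c ∈ A⁰) :
    I * span {c} = J * span {c} ↔ I = J := by
  simp only [le_antisymm_iff, mul_span_singleton_mono_iff_of_mem_nonZeroDivisors hc]

end Ideal

open Ideal

namespace IsEffectiveCartier

variable {A : Type*} [CommRing A] {I J F : Ideal A}

theorem mul_left_inj (hF : IsEffectiveCartier F) : I * F = J * F ↔ I = J := by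
  obtain ⟨c, hc, rfl⟩ := hF
  exact mul_span_singleton_left_inj_of_mem_nonZeroDivisors hc

theorem mul_add_mul_eq_self_iff (hF : IsEffectiveCartier F) : I * F + J * F = F ↔ I + J = ⊤ := by
  rw [← add_mul]
  nth_rw 2 [← one_mul F]
  rw [hF.mul_left_inj, one_eq_top]

theorem exists_eq_mul_of_le (hI : IsEffectiveCartier I) (hF : IsEffectiveCartier F)
    (hle : I ≤ F) : ∃ I', IsEffectiveCartier I' ∧ I = I' * F := by
  obtain ⟨a, ha, rfl⟩ := hI
  obtain ⟨c, hc, rfl⟩ := hF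
  obtain ⟨a', rfl⟩ := span_singleton_le_span_singleton.mp hle
  exact ⟨span {a'}, ⟨a', (mul_mem_nonZeroDivisors.mp ha).2, rfl⟩,
    by rw [mul_comm, span_singleton_mul_span_singleton]⟩

theorem add_eq_of_eq_mul (hF : IsEffectiveCartier F) {I' J' : Ideal A} (hI : I = I' * F)
    (hJ : J = J' * F) (hcomax : I' + J' = ⊤) : I + J = F := by
  rwa [hI, hJ, hF.mul_add_mul_eq_self_iff]

end IsEffectiveCartier

/-- Two effective Cartier divisors `D`, `E` on a scheme, described affine-locally by
ideals `I`, `J` generated by nonzerodivisors. The scheme-theoretic intersection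
`D ×_X E` corresponds to the ideal `I + J`, addition of divisors to multiplication of
ideals, and disjointness of the supports `|D'| ∩ |E'| = ∅` to comaximality
`I' + J' = ⊤`. Then: `D ×_X E` is an effective Cartier divisor iff `D = D' + F`,
`E = E' + F` with `|D'|, |E'|` disjoint; moreover `D'`, `E'`, `F` are then uniquely
determined by `D` and `E`. -/
theorem isEffectiveCartier_inter_iff_and_unique
    {A : Type*} [CommRing A] {I J : Ideal A}
    (hI : IsEffectiveCartier I) (hJ : IsEffectiveCartier J) :
    (IsEffectiveCartier (I + J) ↔
      ∃ I' J' F : Ideal A, IsEffectiveCartier I' ∧ IsEffectiveCartier J' ∧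
        IsEffectiveCartier F ∧ I = I' * F ∧ J = J' * F ∧ I' + J' = ⊤) ∧
    (∀ I₁ J₁ F₁ I₂ J₂ F₂ : Ideal A,
      (IsEffectiveCartier I₁ ∧ IsEffectiveCartier J₁ ∧ IsEffectiveCartier F₁ ∧
        I = I₁ * F₁ ∧ J = J₁ * F₁ ∧ I₁ + J₁ = ⊤) →
      (IsEffectiveCartier I₂ ∧ IsEffectiveCartier J₂ ∧ IsEffectiveCartier F₂ ∧
        I = I₂ * F₂ ∧ J = J₂ * F₂ ∧ I₂ + J₂ = ⊤) →
      I₁ = I₂ ∧ J₁ = J₂ ∧ F₁ = F₂) := by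
  refine ⟨⟨fun hIJ => ?_, ?_⟩, ?_⟩
  · obtain ⟨I', hI', hII'⟩ := hI.exists_eq_mul_of_le hIJ le_sup_left
    obtain ⟨J', hJ', hJJ'⟩ := hJ.exists_eq_mul_of_le hIJ le_sup_right
    refine ⟨I', J', I + J, hI', hJ', hIJ, hII', hJJ', ?_⟩
    rw [← hIJ.mul_add_mul_eq_self_iff, ← hII', ← hJJ']
  · rintro ⟨I', J', F, -, -, hF, hII', hJJ', hcomax⟩
    rwa [hF.add_eq_of_eq_mul hII' hJJ' hcomax]
  · rintro I₁ J₁ F₁ I₂ J₂ F₂ ⟨-, -, hF₁, hI₁, hJ₁, h₁⟩ ⟨-, -, hF₂, hI₂, hJ₂, h₂⟩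
    obtain rfl : F₁ = F₂ :=
      (hF₁.add_eq_of_eq_mul hI₁ hJ₁ h₁).symm.trans (hF₂.add_eq_of_eq_mul hI₂ hJ₂ h₂)
    exact ⟨hF₁.mul_left_inj.mp (hI₁.symm.trans hI₂), hF₁.mul_left_inj.mp (hJ₁.symm.trans hJ₂),
      rfl⟩
end

section
/- Let A be a commutative ring, and let d, e ∈ A be nonzerodivisors such that the ideal (d, e) is generated by a single nonzerodivisor f. Then there exist d', e' ∈ A with d = d'f, e = e'f, and (d', e') = A. -/
/-- Let `A` be a commutative ring and `d, e ∈ A` nonzerodivisors such that the ideal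
`(d, e)` is generated by a single nonzerodivisor `f`. Then there are `d', e' ∈ A` with
`d = d' * f`, `e = e' * f` and `(d', e') = A`. -/
theorem exists_factorization_of_span_pair_eq_span_singleton
    {A : Type*} [CommRing A] (d e f : A)
    (hd : d ∈ nonZeroDivisors A) (he : e ∈ nonZeroDivisors A)
    (hf : f ∈ nonZeroDivisors A)
    (h : Ideal.span ({d, e} : Set A) = Ideal.span ({f} : Set A)) :
    ∃ d' e' : A, d = d' * f ∧ e = e' * f ∧ Ideal.span ({d', e'} : Set A) = ⊤ := by
  have hdmem : d ∈ Ideal.span ({f} : Set A) := by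
    rw [← h]; exact Ideal.subset_span (by simp)
  have hemem : e ∈ Ideal.span ({f} : Set A) := by
    rw [← h]; exact Ideal.subset_span (by simp)
  obtain ⟨d', hd'⟩ := Ideal.mem_span_singleton'.mp hdmem
  obtain ⟨e', he'⟩ := Ideal.mem_span_singleton'.mp hemem
  have hfmem : f ∈ Ideal.span ({d, e} : Set A) := by
    rw [h]; exact Ideal.subset_span rfl
  obtain ⟨a, b, hab⟩ := Ideal.mem_span_pair.mp hfmem
  refine ⟨d', e', hd'.symm, he'.symm, ?_⟩
  rw [Ideal.eq_top_iff_one, Ideal.mem_span_pair]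
  refine ⟨a, b, ?_⟩
  have : (a * d' + b * e') * f = 1 * f := by
    rw [one_mul, add_mul]
    rw [← hd', ← he'] at hab
    linear_combination hab
  exact mul_cancel_right_mem_nonZeroDivisors hf |>.mp this
end

section
/- Let f : X → Y be a separated morphism of schemes and let U ⊆ X be an open dense subset. Assume that the image f(U) is open in Y and that the induced morphism U → f(U) is proper. Then f⁻¹(f(U)) = U. -/
open AlgebraicGeometry CategoryTheory

/-!
Let `W = f⁻¹(f(U))`, an open containing `U`. The proper morphism `U ⟶ f(U)` factors as the
inclusion `U ⟶ W` followed by the separated morphism `W ⟶ f(U)` restricted from `f`, so the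
inclusion `U ⟶ W` is itself proper, in particular a closed map. Its image `U` is therefore
closed and dense in `W`, hence equal to `W`.
-/

namespace AlgebraicGeometry

lemma Scheme.Opens.eq_of_dense_of_universallyClosed_homOfLE {X : Scheme} {U W : X.Opens}
    (hU : Dense (U : Set X)) (hUW : U ≤ W) [UniversallyClosed (X.homOfLE hUW)] : U = W := by
  have : IsDominant (X.homOfLE hUW) := Opens.isDominant_homOfLE hU hUW
  refine le_antisymm hUW fun x hx ↦ ?_
  obtain ⟨⟨y, hyU⟩, hy⟩ := (X.homOfLE hUW).surjective ⟨x, hx⟩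
  rw [Scheme.homOfLE_apply'] at hy
  cases congrArg Subtype.val hy
  exact hyU

end AlgebraicGeometry

/-- **No extra fibre lemma.** Let `f : X ⟶ Y` be a separated morphism of schemes and
`U ⊆ X` an open dense subset. Assume that the image `f(U)` is open in `Y` (given as an
open `V` with underlying set `f '' U`) and that the induced morphism `U ⟶ V = f(U)`
(a morphism `g` with `g ≫ V.ι = U.ι ≫ f`) is proper. Then `f⁻¹(f(U)) = U`. -/
theorem preimage_image_eq_of_proper_over_image
    {X Y : Scheme} (f : X ⟶ Y) [IsSeparated f]
    (U : X.Opens) (hU : Dense (U : Set X))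
    (V : Y.Opens) (hV : (V : Set Y) = f.base '' (U : Set X))
    (g : (U : Scheme) ⟶ (V : Scheme)) (hg : g ≫ V.ι = U.ι ≫ f) [IsProper g] :
    f.base ⁻¹' (f.base '' (U : Set X)) = (U : Set X) := by
  have hUW : U ≤ f ⁻¹ᵁ V := fun x hx ↦
    show f.base x ∈ (V : Set Y) from hV ▸ Set.mem_image_of_mem _ hx
  have hg_eq : g = X.homOfLE hUW ≫ f ∣_ V := by
    rw [← cancel_mono V.ι, hg, Category.assoc, morphismRestrict_ι, Scheme.homOfLE_ι_assoc]
  subst hg_eq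
  have : IsProper (X.homOfLE hUW) := .of_comp _ (f ∣_ V)
  rw [← hV, Scheme.Opens.eq_of_dense_of_universallyClosed_homOfLE hU hUW]
  rfl
end

section
/- Let (C, Σ) be a localiser where Σ admits a calculus of right fractions. Then for any objects c, d of C, the canonical map colim_{(c'→c) ∈ Σ↓c} C(c', d) → C[Σ⁻¹](c, d), sending a pair (s : c' → c in Σ, f : c' → d) to Q(f) ∘ Q(s)⁻¹, is a bijection. -/
/-! An element of the colimit is a right fraction `(s, f)`. Under a calculus of right fractions
every morphism of `C[Σ⁻¹]` is of the form `Q(f) ∘ Q(s)⁻¹`, and two fractions have the same image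
exactly when they admit a common restriction along morphisms of `Σ↓c`, which identifies both
with the restriction in the colimit. -/

open CategoryTheory

namespace RightFractionColimit

variable {C : Type*} [Category C] (W : MorphismProperty C) (c d : C)

/-- The disjoint union `Σ_{(s : c' → c) ∈ Σ↓c} C(c', d)` indexing the colimit
`colim_{(c'→c) ∈ Σ↓c} C(c', d)`. -/
def Index : Type _ :=
  Σ' (a : Over c) (_ : W a.hom), (a.left ⟶ d)

/-- The relation generating the colimit: a pair `(b, f_b)` is identified with its
restriction `(a, α.left ≫ f_b)` along any morphism `α : a ⟶ b` of `Σ↓c`; the quotient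
`Quot (rel)` by (the equivalence relation generated by) this relation is exactly the
colimit of the functor `(Σ↓c)ᵒᵖ ⥤ Set`, `(c' → c) ↦ C(c', d)`. -/
def rel : Index W c d → Index W c d → Prop :=
  fun p q => ∃ α : p.1 ⟶ q.1, p.2.2 = α.left ≫ q.2.2

/-- The canonical map sending `(s : c' → c, f : c' → d)` to `Q(f) ∘ Q(s)⁻¹`. -/
noncomputable def toHom (p : Index W c d) : W.Q.obj c ⟶ W.Q.obj d :=
  (Localization.isoOfHom W.Q W p.1.hom p.2.1).inv ≫ W.Q.map p.2.2

def equivRightFraction : Index W c d ≃ W.RightFraction c d where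
  toFun p := ⟨p.1.hom, p.2.1, p.2.2⟩
  invFun φ := ⟨Over.mk φ.s, φ.hs, φ.f⟩
  left_inv _ := rfl
  right_inv _ := rfl

lemma toHom_eq_map (p : Index W c d) :
    toHom W c d p = (equivRightFraction W c d p).map W.Q (Localization.inverts W.Q W) :=
  rfl

def restrict (p : Index W c d) {Z : C} (t : Z ⟶ p.1.left) (ht : W (t ≫ p.1.hom)) :
    Index W c d :=
  ⟨Over.mk (t ≫ p.1.hom), ht, t ≫ p.2.2⟩

lemma rel_restrict (p : Index W c d) {Z : C} (t : Z ⟶ p.1.left) (ht : W (t ≫ p.1.hom)) :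
    rel W c d (restrict W c d p t ht) p :=
  ⟨Over.homMk t rfl, rfl⟩

lemma mk_eq_mk_of_rightFractionRel {p q : Index W c d}
    (h : MorphismProperty.RightFractionRel (equivRightFraction W c d p)
      (equivRightFraction W c d q)) :
    Quot.mk (rel W c d) p = Quot.mk (rel W c d) q := by
  obtain ⟨Z, t₁, t₂, hs, hf, ht⟩ := h
  have hr : rel W c d (restrict W c d p t₁ ht) q := ⟨Over.homMk t₂ hs.symm, hf⟩
  exact (Quot.sound (rel_restrict W c d p t₁ ht)).symm.trans (Quot.sound hr)

section

variable [W.HasRightCalculusOfFractions]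

lemma mk_eq_mk_of_toHom_eq {p q : Index W c d} (h : toHom W c d p = toHom W c d q) :
    Quot.mk (rel W c d) p = Quot.mk (rel W c d) q := by
  rw [toHom_eq_map, toHom_eq_map, MorphismProperty.RightFraction.map_eq_iff] at h
  exact mk_eq_mk_of_rightFractionRel W c d h

lemma toHom_surjective : Function.Surjective (toHom W c d) := fun g ↦ by
  obtain ⟨φ, rfl⟩ := Localization.exists_rightFraction W.Q W g
  exact ⟨(equivRightFraction W c d).symm φ, toHom_eq_map W c d _⟩

end

/-- If `W` admits a calculus of right fractions then the canonical map
`colim_{(c'→c) ∈ Σ↓c} C(c', d) → C[W⁻¹](c, d)`, `(s, f) ↦ Q(f) ∘ Q(s)⁻¹`, is a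
bijection: any function on the quotient presenting the colimit which is induced by
the canonical map on representatives is bijective. -/
theorem bijective_colimitDesc [W.HasRightCalculusOfFractions]
    (Φ : Quot (rel W c d) → (W.Q.obj c ⟶ W.Q.obj d))
    (hΦ : ∀ p : Index W c d, Φ (Quot.mk _ p) = toHom W c d p) :
    Function.Bijective Φ := by
  refine ⟨fun x y hxy ↦ ?_, fun g ↦ ?_⟩
  · induction x using Quot.ind
    induction y using Quot.ind
    rw [hΦ, hΦ] at hxy
    exact mk_eq_mk_of_toHom_eq W c d hxy
  · obtain ⟨p, rfl⟩ := toHom_surjective W c d g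
    exact ⟨Quot.mk _ p, hΦ p⟩

end RightFractionColimit
end

section
/- Let G : C → D and D : D → C be an adjoint pair of additive functors between additive categories, with D fully faithful, G left adjoint to D, C a Grothendieck abelian category, and G exact. Then D is a Grothendieck abelian category. -/
open CategoryTheory Limits

/-
The reflective subcategory `D` inherits all colimits from `C`, and it is abelian because the
reflector `G` is left exact. As `R ⋙ G ≅ 𝟭 D`, the colimit functor of `D` factors as `R`, then
the colimit functor of `C`, then `G`; all three are left exact, so filtered colimits in `D` are
exact. Maps `G.obj S ⟶ X` correspond to maps `S ⟶ R.obj X`, so as `R` is faithful, `G` sends a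
separator of `C` to a separator of `D`.
-/

/-- A Grothendieck abelian category: an abelian category with all small colimits,
satisfying AB5 (filtered colimits are exact) and admitting a generator
(= separator). -/
def IsGrothendieckCategory (A : Type u) [Category.{v} A] [Abelian A]
    [HasColimits A] : Prop :=
  (∀ (J : Type v) [SmallCategory J] [IsFiltered J],
      Nonempty (PreservesFiniteLimits (colim : (J ⥤ A) ⥤ A))) ∧
  ∃ g : A, IsSeparator g

theorem isGrothendieckCategory_iff {A : Type u} [Category.{v} A] [Abelian A] [HasColimits A] :
    IsGrothendieckCategory A ↔ AB5OfSize.{v, v} A ∧ HasSeparator A :=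
  ⟨fun ⟨hAB5, hSep⟩ => ⟨⟨fun J _ _ => ⟨(hAB5 J).some⟩⟩, ⟨hSep⟩⟩,
    fun ⟨_, hSep⟩ => ⟨fun _ _ _ => ⟨inferInstance⟩, hSep.hasSeparator⟩⟩

namespace CategoryTheory.Adjunction

variable {C : Type u₁} {D : Type u₂} [Category.{v₁} C] [Category.{v₂} D] {F : C ⥤ D} {G : D ⥤ C}

theorem isSeparator_obj (adj : F ⊣ G) [G.Faithful] {S : C} (hS : IsSeparator S) :
    IsSeparator (F.obj S) := by
  refine (isSeparator_def _).2 fun X Y f g hfg => G.map_injective <| hS.def _ _ fun u => ?_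
  simpa only [homEquiv_naturality_right, Equiv.apply_symm_apply] using
    congrArg (adj.homEquiv S Y) (hfg ((adj.homEquiv S X).symm u))

theorem hasSeparator (adj : F ⊣ G) [G.Faithful] [HasSeparator C] : HasSeparator D :=
  ⟨⟨_, adj.isSeparator_obj (isSeparator_separator C)⟩⟩

theorem ab5OfSize (adj : F ⊣ G) [G.Full] [G.Faithful] [HasFilteredColimitsOfSize.{w, w'} C]
    [HasFilteredColimitsOfSize.{w, w'} D] [AB5OfSize.{w, w'} C] [HasFiniteLimits D]
    [PreservesFiniteLimits F] : AB5OfSize.{w, w'} D :=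
  ⟨fun J _ _ => adj.hasExactColimitsOfShape J⟩

end CategoryTheory.Adjunction

/-- Let `G : C ⥤ D` and `R : D ⥤ C` be an adjoint pair of additive functors between
additive categories with `R` fully faithful, `G ⊣ R`, `C` Grothendieck abelian and
`G` exact. Then `D` is Grothendieck abelian. -/
theorem grothendieck_of_reflective
    {C : Type u₁} {D : Type u₂} [Category.{v} C] [Category.{v} D]
    [Preadditive D] [Abelian C] [HasColimits C]
    (hC : IsGrothendieckCategory C)
    (G : C ⥤ D) (R : D ⥤ C) [G.Additive] [R.Additive]
    (adj : G ⊣ R) [R.Full] [R.Faithful]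
    (_ : PreservesFiniteLimits G) (_ : PreservesFiniteColimits G) :
    ∃ (_ : Abelian D) (_ : HasColimits D), IsGrothendieckCategory D := by
  let : Reflective R := ⟨G, adj⟩
  have : HasFiniteProducts D := ⟨fun _ => hasLimitsOfShape_of_reflective R⟩
  let : Abelian D := abelianOfAdjunction R G (asIso adj.counit) adj
  let : HasColimits D := hasColimits_of_reflective R
  obtain ⟨_, _⟩ := isGrothendieckCategory_iff.1 hC
  exact ⟨_, _, isGrothendieckCategory_iff.2 ⟨adj.ab5OfSize, adj.hasSeparator⟩⟩
end

section
/- Let C be an essentially small category closed under finite limits, G : C → D a left exact functor, and Σ = { s ∈ Arrows(C) : G(s) is an isomorphism }. Then Σ admits a calculus of right fractions, and the induced functor Σ⁻¹C → D is conservative and left exact. -/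
/-!
`W` is the inverse image under `G` of the isomorphisms. Since `G` preserves pullbacks, the base
change of a morphism of `W` lies in `W` (the Ore condition); since it preserves equalizers, two
morphisms identified after composing with `s ∈ W` are equalized by their equalizer, which lies in
`W` (right cancellation).

With a calculus of right fractions, finitely many morphisms `L A ⟶ L Xᵢ` of the localization
have a common denominator, and finitely many pairs of parallel morphisms identified by `L` are
equalized by a single morphism of `W`; this is exactly what is needed for `L` to carry finite
limit cones to limit cones. Empty diagrams and cospans in the localization lift, up to
isomorphism, to `C`, so the localization has finite limits and the induced functor preserves
them because `L` and `G` do. Finally, every arrow of the localization is isomorphic to `L f`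
for an arrow `f` of `C`; if the induced functor inverts it then `G` inverts `f`, so `f ∈ W`
and the arrow is an isomorphism.
-/

open CategoryTheory Limits

namespace CategoryTheory

lemma MorphismProperty.hasRightCalculusOfFractions_inverseImage_isomorphisms
    {C D : Type*} [Category C] [Category D] (G : C ⥤ D)
    [HasPullbacks C] [HasEqualizers C] [PreservesLimitsOfShape WalkingCospan G]
    [PreservesLimitsOfShape WalkingParallelPair G] :
    ((isomorphisms D).inverseImage G).HasRightCalculusOfFractions where
  exists_rightFraction X Y φ := by
    have : IsIso (G.map φ.s) := φ.hs
    have hfst : IsIso (G.map (pullback.fst φ.f φ.s)) :=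
      ((IsPullback.of_hasPullback φ.f φ.s).map G).isIso_fst_of_isIso
    exact ⟨⟨pullback.fst φ.f φ.s, hfst, pullback.snd φ.f φ.s⟩, pullback.condition⟩
  ext X Y Y' f₁ f₂ s hs h := by
    have : IsIso (G.map s) := hs
    have hGf : G.map f₁ = G.map f₂ := by
      rw [← cancel_mono (G.map s), ← G.map_comp, ← G.map_comp, h]
    have := isIso_limit_cone_parallelPair_of_eq hGf
      (isLimitOfHasEqualizerOfPreservesLimit G f₁ f₂)
    exact ⟨_, equalizer.ι f₁ f₂, by simpa using this, equalizer.condition f₁ f₂⟩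

section LiftingDiagrams

variable {C E D J : Type*} [Category C] [Category E] [Category D] [Category J] (L : C ⥤ E)
  (hL : ∀ K' : J ⥤ E, ∃ K : J ⥤ C, Nonempty (K ⋙ L ≅ K'))
include hL

lemma hasLimitsOfShape_of_forall_exists_iso_comp [HasLimitsOfShape J C]
    [PreservesLimitsOfShape J L] : HasLimitsOfShape J E where
  has_limit K' := by
    obtain ⟨K, ⟨e⟩⟩ := hL K'
    exact hasLimit_of_iso e

lemma preservesLimitsOfShape_of_forall_exists_iso_comp {G : C ⥤ D} {F : E ⥤ D} (e : L ⋙ F ≅ G)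
    [HasLimitsOfShape J C] [PreservesLimitsOfShape J L] [PreservesLimitsOfShape J G] :
    PreservesLimitsOfShape J F where
  preservesLimit {K'} := by
    obtain ⟨K, ⟨e'⟩⟩ := hL K'
    have : PreservesLimit (K ⋙ L) F :=
      preservesLimit_of_preserves_limit_cone (isLimitOfPreserves L (limit.isLimit K))
        (IsLimit.mapConeEquiv e.symm (isLimitOfPreserves G (limit.isLimit K)))
    exact preservesLimit_of_iso_diagram F e'

end LiftingDiagrams

namespace Localization

variable {C E : Type*} [Category C] [Category E] (L : C ⥤ E) (W : MorphismProperty C)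
  [L.IsLocalization W] [W.HasRightCalculusOfFractions]

lemma exists_common_denominator_of_finset {A : C} {ι : Type*} {X : ι → C}
    (φ : ∀ i, L.obj A ⟶ L.obj (X i)) (S : Finset ι) :
    ∃ (A' : C) (s : A' ⟶ A), W s ∧ ∀ i ∈ S, ∃ f : A' ⟶ X i, L.map s ≫ φ i = L.map f := by
  classical
  induction S using Finset.induction_on with
  | empty => exact ⟨A, 𝟙 A, W.id_mem A, by simp⟩
  | insert j S _ ih =>
    obtain ⟨A', s, hs, hS⟩ := ih
    obtain ⟨ρ, hρ⟩ := exists_rightFraction L W (L.map s ≫ φ j)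
    refine ⟨ρ.X', ρ.s ≫ s, W.comp_mem _ _ ρ.hs hs, fun i hi => ?_⟩
    obtain rfl | hi := Finset.mem_insert.1 hi
    · exact ⟨ρ.f, by rw [L.map_comp, Category.assoc, hρ, ρ.map_s_comp_map]⟩
    · obtain ⟨f, hf⟩ := hS i hi
      exact ⟨ρ.s ≫ f, by rw [L.map_comp, Category.assoc, hf, L.map_comp]⟩

lemma exists_common_denominator {A : C} {ι : Type*} [Finite ι] {X : ι → C}
    (φ : ∀ i, L.obj A ⟶ L.obj (X i)) :
    ∃ (A' : C) (s : A' ⟶ A) (f : ∀ i, A' ⟶ X i), W s ∧ ∀ i, L.map s ≫ φ i = L.map (f i) := by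
  have := Fintype.ofFinite ι
  obtain ⟨A', s, hs, hf⟩ := exists_common_denominator_of_finset L W φ Finset.univ
  choose f hf using fun i => hf i (Finset.mem_univ i)
  exact ⟨A', s, f, hs, hf⟩

lemma exists_common_equalizer_of_finset {A : C} {ι : Type*} {X : ι → C}
    (u v : ∀ i, A ⟶ X i) (huv : ∀ i, L.map (u i) = L.map (v i)) (S : Finset ι) :
    ∃ (A' : C) (t : A' ⟶ A), W t ∧ ∀ i ∈ S, t ≫ u i = t ≫ v i := by
  classical
  induction S using Finset.induction_on with
  | empty => exact ⟨A, 𝟙 A, W.id_mem A, by simp⟩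
  | insert j S _ ih =>
    obtain ⟨A', t, ht, hS⟩ := ih
    obtain ⟨A'', r, hr, hrj⟩ := (MorphismProperty.map_eq_iff_precomp L W (t ≫ u j) (t ≫ v j)).1
      (by rw [L.map_comp, L.map_comp, huv j])
    refine ⟨A'', r ≫ t, W.comp_mem _ _ hr ht, fun i hi => ?_⟩
    obtain rfl | hi := Finset.mem_insert.1 hi
    · simpa using hrj
    · rw [Category.assoc, Category.assoc, hS i hi]

lemma exists_common_equalizer {A : C} {ι : Type*} [Finite ι] {X : ι → C}
    (u v : ∀ i, A ⟶ X i) (huv : ∀ i, L.map (u i) = L.map (v i)) :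
    ∃ (A' : C) (t : A' ⟶ A), W t ∧ ∀ i, t ≫ u i = t ≫ v i := by
  have := Fintype.ofFinite ι
  obtain ⟨A', t, ht, h⟩ := exists_common_equalizer_of_finset L W u v huv Finset.univ
  exact ⟨A', t, ht, fun i => h i (Finset.mem_univ i)⟩

variable {J : Type*} [SmallCategory J] [FinCategory J] {K : J ⥤ C} {c : Cone K}

include W in
lemma exists_lift_of_isLimit (hc : IsLimit c) {A : C} (φ : ∀ j, L.obj A ⟶ L.obj (K.obj j))
    (hφ : ∀ ⦃j j' : J⦄ (u : j ⟶ j'), φ j ≫ L.map (K.map u) = φ j') :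
    ∃ χ : L.obj A ⟶ L.obj c.pt, ∀ j, χ ≫ L.map (c.π.app j) = φ j := by
  obtain ⟨A', s, f, hs, hf⟩ := exists_common_denominator L W φ
  -- the naturality defects of `f` vanish in the localization, so one `t ∈ W` kills them all
  obtain ⟨A'', t, ht, hnat⟩ := exists_common_equalizer L W
    (fun q : Σ p : J × J, p.1 ⟶ p.2 => f q.1.1 ≫ K.map q.2) (fun q => f q.1.2)
    (fun ⟨⟨j, j'⟩, u⟩ => by simp only [L.map_comp, ← hf, Category.assoc, hφ u])
  let c' : Cone K :=
    { pt := A''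
      π := { app := fun j => t ≫ f j
             naturality := fun j j' u => by simpa using (hnat ⟨⟨j, j'⟩, u⟩).symm } }
  have := inverts L W _ (W.comp_mem _ _ ht hs)
  refine ⟨inv (L.map (t ≫ s)) ≫ L.map (hc.lift c'), fun j => ?_⟩
  rw [Category.assoc, ← L.map_comp, hc.fac c' j, IsIso.inv_comp_eq]
  simp [c', hf]

include W in
lemma hom_ext_of_isLimit (hc : IsLimit c) {A : C} {χ₁ χ₂ : L.obj A ⟶ L.obj c.pt}
    (h : ∀ j, χ₁ ≫ L.map (c.π.app j) = χ₂ ≫ L.map (c.π.app j)) : χ₁ = χ₂ := by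
  obtain ⟨A', s, f, hs, hf⟩ := exists_common_denominator L W (X := fun _ : Fin 2 => c.pt) ![χ₁, χ₂]
  have hf₁ : L.map s ≫ χ₁ = L.map (f 0) := hf 0
  have hf₂ : L.map s ≫ χ₂ = L.map (f 1) := hf 1
  obtain ⟨A'', t, ht, heq⟩ := exists_common_equalizer L W
    (fun j => f 0 ≫ c.π.app j) (fun j => f 1 ≫ c.π.app j)
    (fun j => by simp only [L.map_comp, ← hf₁, ← hf₂, Category.assoc, h j])
  have hft : t ≫ f 0 = t ≫ f 1 := hc.hom_ext fun j => by simpa using heq j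
  have := inverts L W _ (W.comp_mem _ _ ht hs)
  rw [← cancel_epi (L.map (t ≫ s)), L.map_comp, Category.assoc, Category.assoc, hf₁, hf₂,
    ← L.map_comp, ← L.map_comp, hft]

include W in
variable (J) in
lemma preservesLimitsOfShape_of_hasRightCalculusOfFractions : PreservesLimitsOfShape J L where
  preservesLimit {K} := ⟨fun {c} hc => ⟨IsLimit.ofExistsUnique fun d => by
    have := essSurj L W
    let e := L.objObjPreimageIso d.pt
    obtain ⟨χ, hχ⟩ := exists_lift_of_isLimit L W hc (fun j => e.hom ≫ d.π.app j)
      (fun j j' u => by simpa using d.w u)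
    refine ⟨e.inv ≫ χ, fun j => by simp [hχ],
      fun m (hm : ∀ j, m ≫ L.map (c.π.app j) = d.π.app j) => ?_⟩
    rw [Iso.eq_inv_comp]
    exact hom_ext_of_isLimit L W hc fun j => by simp [hχ, hm]⟩⟩

include W in
lemma preservesFiniteLimits_of_hasRightCalculusOfFractions : PreservesFiniteLimits L where
  preservesFiniteLimits J _ _ := preservesLimitsOfShape_of_hasRightCalculusOfFractions L W J

include W in
lemma exists_iso_comp_of_walkingCospan (K' : WalkingCospan ⥤ E) :
    ∃ K : WalkingCospan ⥤ C, Nonempty (K ⋙ L ≅ K') := by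
  have := essSurj L W
  let eX := L.objObjPreimageIso (K'.obj .left)
  let eY := L.objObjPreimageIso (K'.obj .right)
  let eZ := L.objObjPreimageIso (K'.obj .one)
  obtain ⟨φ, hφ⟩ := exists_rightFraction L W (eX.hom ≫ K'.map WalkingCospan.Hom.inl ≫ eZ.inv)
  obtain ⟨ψ, hψ⟩ := exists_rightFraction L W (eY.hom ≫ K'.map WalkingCospan.Hom.inr ≫ eZ.inv)
  refine ⟨cospan φ.f ψ.f, ⟨cospanCompIso L φ.f ψ.f ≪≫
    cospanExt (isoOfHom L W φ.s φ.hs ≪≫ eX) (isoOfHom L W ψ.s ψ.hs ≪≫ eY) eZ ?_ ?_ ≪≫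
    (diagramIsoCospan K').symm⟩⟩
  · simp [← φ.map_s_comp_map L (inverts L W), ← hφ]
  · simp [← ψ.map_s_comp_map L (inverts L W), ← hψ]

variable {D : Type*} [Category D] (G : C ⥤ D) (F : E ⥤ D) [Lifting L W G F]

include L W in
lemma preservesFiniteLimits_of_lifting [HasFiniteLimits C] [PreservesFiniteLimits G] :
    PreservesFiniteLimits F := by
  have := preservesFiniteLimits_of_hasRightCalculusOfFractions L W
  have hEmpty : ∀ K' : Discrete PEmpty ⥤ E, ∃ K : Discrete PEmpty ⥤ C, Nonempty (K ⋙ L ≅ K') :=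
    fun _ => ⟨Functor.empty C, ⟨Functor.emptyExt _ _⟩⟩
  have hCospan := exists_iso_comp_of_walkingCospan L W
  have : HasTerminal E := hasLimitsOfShape_of_forall_exists_iso_comp L hEmpty
  have : HasPullbacks E := hasLimitsOfShape_of_forall_exists_iso_comp L hCospan
  have e := Lifting.iso L W G F
  have := preservesLimitsOfShape_of_forall_exists_iso_comp L hEmpty e
  have := preservesLimitsOfShape_of_forall_exists_iso_comp L hCospan e
  exact preservesFiniteLimits_of_preservesTerminal_and_pullbacks F

include L in
lemma reflectsIsomorphisms_of_lifting
    (hG : ∀ ⦃X Y : C⦄ (s : X ⟶ Y), IsIso (G.map s) → W s) : F.ReflectsIsomorphisms where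
  reflects {A B} φ hφ := by
    have := essSurj_mapArrow_of_hasRightCalculusOfFractions L W
    obtain ⟨f, ⟨e⟩⟩ : ∃ f : Arrow C, Nonempty (L.mapArrow.obj f ≅ Arrow.mk φ) :=
      ⟨_, ⟨L.mapArrow.objObjPreimageIso _⟩⟩
    have hLF : IsIso ((L ⋙ F).map f.hom) :=
      ((MorphismProperty.isomorphisms D).arrow_mk_iso_iff (F.mapArrow.mapIso e)).2 hφ
    have hGf : IsIso (G.map f.hom) := (NatIso.isIso_map_iff (Lifting.iso L W G F) f.hom).1 hLF
    have := inverts L W f.hom (hG f.hom hGf)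
    exact ((MorphismProperty.isomorphisms E).arrow_mk_iso_iff e).1 this

end Localization

end CategoryTheory

theorem inverted_class_calculus_and_induced_functor_general
    {C D : Type*} [Category C] [Category D]
    [HasFiniteLimits C]
    (G : C ⥤ D) [PreservesFiniteLimits G]
    (W : MorphismProperty C) (hW : ∀ {X Y : C} (s : X ⟶ Y), W s ↔ IsIso (G.map s))
    (hG : W.IsInvertedBy G) :
    W.HasRightCalculusOfFractions ∧
    (Localization.lift G hG W.Q).ReflectsIsomorphisms ∧
    Nonempty (PreservesFiniteLimits (Localization.lift G hG W.Q)) := by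
  have hW_eq : W = (MorphismProperty.isomorphisms D).inverseImage G := by
    ext X Y s
    exact hW s
  have hcalc : W.HasRightCalculusOfFractions :=
    hW_eq ▸ MorphismProperty.hasRightCalculusOfFractions_inverseImage_isomorphisms G
  exact ⟨hcalc,
    Localization.reflectsIsomorphisms_of_lifting W.Q W G _ fun _ _ s => (hW s).2,
    ⟨Localization.preservesFiniteLimits_of_lifting W.Q W G _⟩⟩

/-- Let `C` be an essentially small category closed under finite limits, `G : C ⥤ D`
a left exact functor and `Σ` (here `W`) the class of morphisms inverted by `G`. Then
`Σ` admits a calculus of right fractions, and the induced functor `Σ⁻¹C ⥤ D`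
(through which `G` factors) is conservative and left exact. -/
theorem inverted_class_calculus_and_induced_functor
    {C D : Type*} [Category C] [Category D]
    [EssentiallySmall C] [HasFiniteLimits C]
    (G : C ⥤ D) [PreservesFiniteLimits G]
    (W : MorphismProperty C) (hW : ∀ {X Y : C} (s : X ⟶ Y), W s ↔ IsIso (G.map s))
    (hG : W.IsInvertedBy G) :
    W.HasRightCalculusOfFractions ∧
    (Localization.lift G hG W.Q).ReflectsIsomorphisms ∧
    Nonempty (PreservesFiniteLimits (Localization.lift G hG W.Q)) :=
  inverted_class_calculus_and_induced_functor_general G W hW hG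
end

section
/- Let C be a category admitting an initial object ∅ such that every morphism with target ∅ is an isomorphism, and let (C, Σ) be a localiser with Σ admitting a calculus of right fractions. Then the localisation C[Σ⁻¹] has an initial object (namely Q(∅)) which also satisfies the property that every morphism with target Q(∅) is an isomorphism. -/
open CategoryTheory Limits

/-- Any morphism in the localization into `Q.obj empt` comes from a right fraction whose
numerator lands in `empt`, hence is an isomorphism. -/
lemma aux_strict
    {C : Type*} [Category C] (W : MorphismProperty C)
    [W.HasRightCalculusOfFractions]
    (empt : C)
    (hstrict : ∀ (X : C) (f : X ⟶ empt), IsIso f) :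
    ∀ (X : W.Localization) (f : X ⟶ W.Q.obj empt), IsIso f := by
  intro X f
  have e : W.Q.obj ((Localization.Construction.objEquiv W).symm X) = X :=
    (Localization.Construction.objEquiv W).right_inv X
  let g : W.Q.obj ((Localization.Construction.objEquiv W).symm X) ⟶ W.Q.obj empt :=
    eqToHom e ≫ f
  obtain ⟨φ, hφ⟩ := Localization.exists_rightFraction W.Q W g
  have hfiso : IsIso φ.f := hstrict _ φ.f
  have hsiso : IsIso (W.Q.map φ.s) := Localization.inverts W.Q W φ.s φ.hs
  have : IsIso g := by
    rw [hφ]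
    dsimp [MorphismProperty.RightFraction.map]
    infer_instance
  have : f = eqToHom e.symm ≫ g := by simp [g]
  rw [this]
  infer_instance

/-- Let `C` have an initial object `∅` such that every morphism with target `∅` is an
isomorphism (a strict initial object), and let `W` admit a calculus of right
fractions. Then the localisation `C[W⁻¹]` has an initial object, namely `Q(∅)`, which
again has the property that every morphism with target `Q(∅)` is an isomorphism. -/
theorem localization_strict_initial
    {C : Type*} [Category C] (W : MorphismProperty C)
    [W.HasRightCalculusOfFractions]
    (empt : C) (hinit : IsInitial empt)
    (hstrict : ∀ (X : C) (f : X ⟶ empt), IsIso f) :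
    Nonempty (IsInitial (W.Q.obj empt)) ∧
    (∀ (X : W.Localization) (f : X ⟶ W.Q.obj empt), IsIso f) := by
  refine ⟨⟨IsInitial.ofUniqueHom
    (fun X => W.Q.map (hinit.to ((Localization.Construction.objEquiv W).symm X)) ≫
      eqToHom ((Localization.Construction.objEquiv W).right_inv X)) ?_⟩,
    aux_strict W empt hstrict⟩
  intro X m
  set Y := (Localization.Construction.objEquiv W).symm X with hY
  have e : W.Q.obj Y = X := (Localization.Construction.objEquiv W).right_inv X
  have key : ∀ (m' : W.Q.obj empt ⟶ W.Q.obj Y), m' = W.Q.map (hinit.to Y) := by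
    intro m'
    obtain ⟨φ, hφ⟩ := Localization.exists_rightFraction W.Q W m'
    have hsiso : IsIso φ.s := hstrict _ φ.s
    have : φ.map W.Q (Localization.inverts W.Q W) = W.Q.map (inv φ.s ≫ φ.f) := by
      dsimp [MorphismProperty.RightFraction.map]
      rw [Functor.map_comp, Functor.map_inv]
    rw [hφ, this, hinit.hom_ext (inv φ.s ≫ φ.f) (hinit.to Y)]
  have : m ≫ eqToHom e.symm = W.Q.map (hinit.to Y) := key _
  calc m = (m ≫ eqToHom e.symm) ≫ eqToHom e := by simp
    _ = W.Q.map (hinit.to Y) ≫ eqToHom e := by rw [this]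
end
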